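/- arXiv:2405.01979 — 5 statements merged into one kernel-verified Lean document; each statement's English description precedes it below -/
import Mathlib

section
/- Let X be a type, f, g : X → ℝ and f̂, ĝ : X → X → ℝ. Assume: (i) f̂ x y ≤ f x for all x, y (the surrogate objective minorizes the objective); (ii) f̂ x x = f x for all x; (iii) g x ≤ ĝ x y for all x, y (the surrogate constraint majorizes the constraint); (iv) ĝ x x = g x for all x. Let x : ℕ → X be a sequence such that ĝ (x 0) (x 0) ≤ 0 and, for every n, x (n+1) maximizes the surrogate subproblem at x n, i.e. ĝ (x (n+1)) (x n) ≤ 0 and for all y with ĝ y (x n) ≤ 0 one has f̂ y (x n) ≤ f̂ (x (n+1)) (x n). Then: (a) every iterate is feasible for the original constraint, g (x n) ≤ 0 for all n, and each iterate is feasible for its own next surrogate subproblem, ĝ (x n) (x n) ≤ 0; (b) the objective values are monotonically nondecreasing, f (x n) ≤ f (x (n+1)) for all n; (c) if f is bounded above on the set {y : g y ≤ 0}, then the sequence (f (x n)) converges. -/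
/-!
Since `gh · a` majorizes `g`, a point feasible for the subproblem at `a` is feasible for the
original problem, and tightness at the anchor makes every feasible `a` feasible for its own
subproblem. Hence the current iterate competes in the next subproblem, so
`f (x n) = fh (x n) (x n) ≤ fh (x (n+1)) (x n) ≤ f (x (n+1))`; a monotone real sequence that is
bounded above converges.
-/

theorem IsMaxOn.le_of_minorant {X β : Type*} [Preorder β] {f φ : X → β} {S : Set X} {a z : X}
    (hz : IsMaxOn φ S z) (hmin : φ z ≤ f z) (htight : φ a = f a) (ha : a ∈ S) :
    f a ≤ f z :=
  calc f a = φ a := htight.symm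
    _ ≤ φ z := hz ha
    _ ≤ f z := hmin

/-- Abstract convergence content of Lemma 1 for the SCA procedure (Algorithm 1):
with a surrogate objective `fh` minorizing `f` (tight at the anchor) and a
surrogate constraint `gh` majorizing `g` (tight at the anchor), any SCA iterate
sequence is feasible for the original problem and for its own next subproblem,
the objective values are monotonically nondecreasing, and if `f` is bounded
above on the feasible set then the objective values converge. -/
theorem sca_convergence {X : Type*} (f g : X → ℝ) (fh gh : X → X → ℝ)
    (hmin : ∀ x y, fh x y ≤ f x) (htightf : ∀ x, fh x x = f x)
    (hmaj : ∀ x y, g x ≤ gh x y) (htightg : ∀ x, gh x x = g x)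
    (x : ℕ → X) (h0 : gh (x 0) (x 0) ≤ 0)
    (hfeas : ∀ n, gh (x (n + 1)) (x n) ≤ 0)
    (hopt : ∀ n, ∀ y, gh y (x n) ≤ 0 → fh y (x n) ≤ fh (x (n + 1)) (x n)) :
    (∀ n, g (x n) ≤ 0 ∧ gh (x n) (x n) ≤ 0) ∧
    (∀ n, f (x n) ≤ f (x (n + 1))) ∧
    ((∃ C : ℝ, ∀ y, g y ≤ 0 → f y ≤ C) →
      ∃ l : ℝ, Filter.Tendsto (fun n => f (x n)) Filter.atTop (nhds l)) := by
  have hg : ∀ n, g (x n) ≤ 0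
    | 0 => htightg (x 0) ▸ h0
    | n + 1 => (hmaj _ _).trans (hfeas n)
  have hgh (n : ℕ) : gh (x n) (x n) ≤ 0 := (htightg _).symm ▸ hg n
  have hmono (n : ℕ) : f (x n) ≤ f (x (n + 1)) :=
    (isMaxOn_iff.2 (hopt n)).le_of_minorant (S := {y | gh y (x n) ≤ 0})
      (hmin _ _) (htightf _) (hgh n)
  refine ⟨fun n => ⟨hg n, hgh n⟩, hmono, fun ⟨C, hC⟩ => ?_⟩
  have hbdd : BddAbove (Set.range fun n => f (x n)) :=
    ⟨C, by rintro _ ⟨n, rfl⟩; exact hC _ (hg n)⟩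
  exact ⟨_, tendsto_atTop_ciSup (monotone_nat_of_le_succ hmono) hbdd⟩
end

section
/- With the SINR and sum rate as defined in the context, call a tuple (w, θ^T, θ^R, β^T, β^R), where θ^T, θ^R : Fin S → ℂ and β^T, β^R : Fin S → ℝ, feasible if Σ_k ‖w_k‖² ≤ P, |θ^T_s| = 1 and |θ^R_s| = 1 for all s, 0 ≤ β^T_s, 0 ≤ β^R_s, and (β^T_s)² + (β^R_s)² ≤ 1 for all s, and let its sum rate be computed with coefficients φ^χ_s = β^χ_s · θ^χ_s. Let π₁ be a permutation of Fin S and π₂ a permutation of Fin K, and permute the problem data by ĥ_{π₁(s), π₂(k)} = h̃_{s,k} and χ̂(π₂(k)) = χ(k). If (w*, θ*ᵀ, θ*ᴿ, β*ᵀ, β*ᴿ) is feasible and its sum rate is greater than or equal to the sum rate of every feasible tuple for the channel data (h̃, χ), then the permuted tuple defined by ŵ_{π₂(k)} = w*_k, θ̂^χ_{π₁(s)} = θ*^χ_s, β̂^χ_{π₁(s)} = β*^χ_s is feasible and its sum rate is greater than or equal to the sum rate of every feasible tuple for the permuted channel data (ĥ, χ̂); moreover the two optimal sum-rate values are equal.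 -/
/-- Regions of a STAR-RIS: transmission (`T`) or reflection (`R`). -/
inductive Region : Type
  | T : Region
  | R : Region

/-- The STAR-RIS coefficient `φ^{χ(k)}_s` seen by user `k` at element `s`. -/
def coeff {S K : ℕ} (χ : Fin K → Region) (φT φR : Fin S → ℂ)
    (k : Fin K) (s : Fin S) : ℂ :=
  match χ k with
  | Region.T => φT s
  | Region.R => φR s

/-- SINR of user `k`. -/
noncomputable def sinr {S K Nt : ℕ}
    (h : Fin S → Fin K → EuclideanSpace ℂ (Fin Nt)) (χ : Fin K → Region)
    (φT φR : Fin S → ℂ) (w : Fin K → EuclideanSpace ℂ (Fin Nt)) (σ2 : ℝ)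
    (k : Fin K) : ℝ :=
  ‖∑ s, coeff χ φT φR k s * (inner ℂ (h s k) (w k) : ℂ)‖ ^ 2 /
    ((∑ j ∈ Finset.univ.erase k,
        ‖∑ s, coeff χ φT φR k s * (inner ℂ (h s k) (w j) : ℂ)‖ ^ 2) + σ2)

/-- System sum rate `Σ_k log₂(1 + γ_k)`. -/
noncomputable def sumRate {S K Nt : ℕ}
    (h : Fin S → Fin K → EuclideanSpace ℂ (Fin Nt)) (χ : Fin K → Region)
    (φT φR : Fin S → ℂ) (w : Fin K → EuclideanSpace ℂ (Fin Nt)) (σ2 : ℝ) : ℝ :=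
  ∑ k, Real.logb 2 (1 + sinr h χ φT φR w σ2 k)

/-- Feasibility of a tuple `(w, θT, θR, βT, βR)`: power budget, unit-modulus phase
shifts, nonnegative amplitudes and the energy-splitting constraint. -/
def Feasible {S K Nt : ℕ} (P : ℝ) (w : Fin K → EuclideanSpace ℂ (Fin Nt))
    (θT θR : Fin S → ℂ) (βT βR : Fin S → ℝ) : Prop :=
  (∑ k, ‖w k‖ ^ 2) ≤ P ∧ (∀ s, ‖θT s‖ = 1) ∧
    (∀ s, ‖θR s‖ = 1) ∧ (∀ s, 0 ≤ βT s) ∧ (∀ s, 0 ≤ βR s) ∧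
    (∀ s, (βT s) ^ 2 + (βR s) ^ 2 ≤ 1)

/-- Sum rate of a tuple, computed with the coefficients `φ^χ_s = β^χ_s · θ^χ_s`. -/
noncomputable def tupleRate {S K Nt : ℕ}
    (h : Fin S → Fin K → EuclideanSpace ℂ (Fin Nt)) (χ : Fin K → Region) (σ2 : ℝ)
    (w : Fin K → EuclideanSpace ℂ (Fin Nt)) (θT θR : Fin S → ℂ)
    (βT βR : Fin S → ℝ) : ℝ :=
  sumRate h χ (fun s => (βT s : ℂ) * θT s) (fun s => (βR s : ℂ) * θR s) w σ2

/-!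
Relabelling STAR-RIS elements by `π₁` and users by `π₂` only reindexes the sums in the SINR
and in the sum rate, so every tuple has the same sum rate as its relabelling, and the
feasibility constraints, being per element or a sum over users, are preserved as well.
Relabelling is a bijection between the feasible sets of the two problems that preserves the
objective, hence it maps maximizers to maximizers.
-/

section Relabel

variable {S K Nt : ℕ} (π₁ : Equiv.Perm (Fin S)) (π₂ : Equiv.Perm (Fin K))

theorem feasible_perm_iff {P : ℝ} {w w2 : Fin K → EuclideanSpace ℂ (Fin Nt)}
    {θT θR θT2 θR2 : Fin S → ℂ} {βT βR βT2 βR2 : Fin S → ℝ}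
    (hw : ∀ k, w2 (π₂ k) = w k)
    (hθT : ∀ s, θT2 (π₁ s) = θT s) (hθR : ∀ s, θR2 (π₁ s) = θR s)
    (hβT : ∀ s, βT2 (π₁ s) = βT s) (hβR : ∀ s, βR2 (π₁ s) = βR s) :
    Feasible P w2 θT2 θR2 βT2 βR2 ↔ Feasible P w θT θR βT βR := by
  have hpower : ∑ k, ‖w2 k‖ ^ 2 = ∑ k, ‖w k‖ ^ 2 := by
    rw [← Equiv.sum_comp π₂]
    simp only [hw]
  simp only [Feasible, hpower, ← π₁.forall_congr_right (q := fun s => ‖θT2 s‖ = 1),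
    ← π₁.forall_congr_right (q := fun s => ‖θR2 s‖ = 1),
    ← π₁.forall_congr_right (q := fun s => 0 ≤ βT2 s),
    ← π₁.forall_congr_right (q := fun s => 0 ≤ βR2 s),
    ← π₁.forall_congr_right (q := fun s => βT2 s ^ 2 + βR2 s ^ 2 ≤ 1), hθT, hθR, hβT, hβR]

variable {h h2 : Fin S → Fin K → EuclideanSpace ℂ (Fin Nt)} {χ χ2 : Fin K → Region}
  {w w2 : Fin K → EuclideanSpace ℂ (Fin Nt)} {φT φR φT2 φR2 : Fin S → ℂ}

theorem coeff_perm (hχ : ∀ k, χ2 (π₂ k) = χ k)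
    (hT : ∀ s, φT2 (π₁ s) = φT s) (hR : ∀ s, φR2 (π₁ s) = φR s) (k : Fin K) (s : Fin S) :
    coeff χ2 φT2 φR2 (π₂ k) (π₁ s) = coeff χ φT φR k s := by
  unfold coeff
  rw [hχ k]
  cases χ k
  · exact hT s
  · exact hR s

theorem sinr_perm (hh : ∀ s k, h2 (π₁ s) (π₂ k) = h s k) (hχ : ∀ k, χ2 (π₂ k) = χ k)
    (hw : ∀ k, w2 (π₂ k) = w k)
    (hT : ∀ s, φT2 (π₁ s) = φT s) (hR : ∀ s, φR2 (π₁ s) = φR s) (σ2 : ℝ) (k : Fin K) :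
    sinr h2 χ2 φT2 φR2 w2 σ2 (π₂ k) = sinr h χ φT φR w σ2 k := by
  have hamplitude : ∀ j, ∑ s, coeff χ2 φT2 φR2 (π₂ k) s * inner ℂ (h2 s (π₂ k)) (w2 (π₂ j)) =
      ∑ s, coeff χ φT φR k s * inner ℂ (h s k) (w j) := by
    intro j
    rw [← Equiv.sum_comp π₁]
    simp only [coeff_perm π₁ π₂ hχ hT hR, hh, hw]
  have hinterferers : Finset.univ.erase (π₂ k) = (Finset.univ.erase k).map π₂.toEmbedding := by
    rw [Finset.map_erase, Finset.map_univ_equiv, Equiv.coe_toEmbedding]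
  simp only [sinr, hinterferers, Finset.sum_map, Equiv.coe_toEmbedding, hamplitude]

theorem sumRate_perm (hh : ∀ s k, h2 (π₁ s) (π₂ k) = h s k) (hχ : ∀ k, χ2 (π₂ k) = χ k)
    (hw : ∀ k, w2 (π₂ k) = w k)
    (hT : ∀ s, φT2 (π₁ s) = φT s) (hR : ∀ s, φR2 (π₁ s) = φR s) (σ2 : ℝ) :
    sumRate h2 χ2 φT2 φR2 w2 σ2 = sumRate h χ φT φR w σ2 := by
  rw [sumRate, ← Equiv.sum_comp π₂]
  simp only [sinr_perm π₁ π₂ hh hχ hw hT hR, sumRate]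

theorem tupleRate_perm (hh : ∀ s k, h2 (π₁ s) (π₂ k) = h s k) (hχ : ∀ k, χ2 (π₂ k) = χ k)
    (hw : ∀ k, w2 (π₂ k) = w k) {θT θR θT2 θR2 : Fin S → ℂ} {βT βR βT2 βR2 : Fin S → ℝ}
    (hθT : ∀ s, θT2 (π₁ s) = θT s) (hθR : ∀ s, θR2 (π₁ s) = θR s)
    (hβT : ∀ s, βT2 (π₁ s) = βT s) (hβR : ∀ s, βR2 (π₁ s) = βR s) (σ2 : ℝ) :
    tupleRate h2 χ2 σ2 w2 θT2 θR2 βT2 βR2 = tupleRate h χ σ2 w θT θR βT βR :=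
  sumRate_perm π₁ π₂ hh hχ hw (fun s => by simp only [hθT, hβT])
    (fun s => by simp only [hθR, hβR]) σ2

end Relabel

theorem optimal_policy_perm_equivariant_general {S K Nt : ℕ}
    (σ2 P : ℝ)
    (h h2 : Fin S → Fin K → EuclideanSpace ℂ (Fin Nt)) (χ χ2 : Fin K → Region)
    (π₁ : Equiv.Perm (Fin S)) (π₂ : Equiv.Perm (Fin K))
    (hh : ∀ s k, h2 (π₁ s) (π₂ k) = h s k)
    (hχ : ∀ k, χ2 (π₂ k) = χ k)
    (ws : Fin K → EuclideanSpace ℂ (Fin Nt)) (θTs θRs : Fin S → ℂ)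
    (βTs βRs : Fin S → ℝ)
    (hfeas : Feasible P ws θTs θRs βTs βRs)
    (hopt : ∀ (w : Fin K → EuclideanSpace ℂ (Fin Nt)) (θT θR : Fin S → ℂ)
        (βT βR : Fin S → ℝ), Feasible P w θT θR βT βR →
        tupleRate h χ σ2 w θT θR βT βR ≤ tupleRate h χ σ2 ws θTs θRs βTs βRs)
    (w2 : Fin K → EuclideanSpace ℂ (Fin Nt)) (θT2 θR2 : Fin S → ℂ)
    (βT2 βR2 : Fin S → ℝ)
    (hw2 : ∀ k, w2 (π₂ k) = ws k)
    (hθT2 : ∀ s, θT2 (π₁ s) = θTs s) (hθR2 : ∀ s, θR2 (π₁ s) = θRs s)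
    (hβT2 : ∀ s, βT2 (π₁ s) = βTs s) (hβR2 : ∀ s, βR2 (π₁ s) = βRs s) :
    Feasible P w2 θT2 θR2 βT2 βR2 ∧
    (∀ (w : Fin K → EuclideanSpace ℂ (Fin Nt)) (θT θR : Fin S → ℂ)
        (βT βR : Fin S → ℝ), Feasible P w θT θR βT βR →
        tupleRate h2 χ2 σ2 w θT θR βT βR ≤ tupleRate h2 χ2 σ2 w2 θT2 θR2 βT2 βR2) ∧
    tupleRate h2 χ2 σ2 w2 θT2 θR2 βT2 βR2 = tupleRate h χ σ2 ws θTs θRs βTs βRs := by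
  have hrate := tupleRate_perm π₁ π₂ hh hχ hw2 hθT2 hθR2 hβT2 hβR2 σ2
  refine ⟨(feasible_perm_iff π₁ π₂ hw2 hθT2 hθR2 hβT2 hβR2).2 hfeas, ?_, hrate⟩
  intro w θT θR βT βR hf
  have hpullback := (feasible_perm_iff π₁ π₂ (fun _ => rfl) (fun _ => rfl) (fun _ => rfl)
    (fun _ => rfl) (fun _ => rfl)).1 hf
  calc tupleRate h2 χ2 σ2 w θT θR βT βR
      = tupleRate h χ σ2 (w ∘ π₂) (θT ∘ π₁) (θR ∘ π₁) (βT ∘ π₁) (βR ∘ π₁) :=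
        tupleRate_perm π₁ π₂ hh hχ (fun _ => rfl) (fun _ => rfl) (fun _ => rfl) (fun _ => rfl)
          (fun _ => rfl) σ2
    _ ≤ tupleRate h χ σ2 ws θTs θRs βTs βRs := hopt _ _ _ _ _ hpullback
    _ = tupleRate h2 χ2 σ2 w2 θT2 θR2 βT2 βR2 := hrate.symm

/-- Permutation equivariance of the optimal joint active and passive beamforming
policy: permuting STAR-RIS elements and users in the channel data permutes the
optimal beamformers and STAR-RIS coefficients accordingly, and the optimal sum
rates coincide. -/
theorem optimal_policy_perm_equivariant {S K Nt : ℕ} (hK : 1 ≤ K)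
    (σ2 P : ℝ) (hσ : 0 < σ2) (hP : 0 < P)
    (h h2 : Fin S → Fin K → EuclideanSpace ℂ (Fin Nt)) (χ χ2 : Fin K → Region)
    (π₁ : Equiv.Perm (Fin S)) (π₂ : Equiv.Perm (Fin K))
    (hh : ∀ s k, h2 (π₁ s) (π₂ k) = h s k)
    (hχ : ∀ k, χ2 (π₂ k) = χ k)
    (ws : Fin K → EuclideanSpace ℂ (Fin Nt)) (θTs θRs : Fin S → ℂ)
    (βTs βRs : Fin S → ℝ)
    (hfeas : Feasible P ws θTs θRs βTs βRs)
    (hopt : ∀ (w : Fin K → EuclideanSpace ℂ (Fin Nt)) (θT θR : Fin S → ℂ)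
        (βT βR : Fin S → ℝ), Feasible P w θT θR βT βR →
        tupleRate h χ σ2 w θT θR βT βR ≤ tupleRate h χ σ2 ws θTs θRs βTs βRs)
    (w2 : Fin K → EuclideanSpace ℂ (Fin Nt)) (θT2 θR2 : Fin S → ℂ)
    (βT2 βR2 : Fin S → ℝ)
    (hw2 : ∀ k, w2 (π₂ k) = ws k)
    (hθT2 : ∀ s, θT2 (π₁ s) = θTs s) (hθR2 : ∀ s, θR2 (π₁ s) = θRs s)
    (hβT2 : ∀ s, βT2 (π₁ s) = βTs s) (hβR2 : ∀ s, βR2 (π₁ s) = βRs s) :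
    Feasible P w2 θT2 θR2 βT2 βR2 ∧
    (∀ (w : Fin K → EuclideanSpace ℂ (Fin Nt)) (θT θR : Fin S → ℂ)
        (βT βR : Fin S → ℝ), Feasible P w θT θR βT βR →
        tupleRate h2 χ2 σ2 w θT θR βT βR ≤ tupleRate h2 χ2 σ2 w2 θT2 θR2 βT2 βR2) ∧
    tupleRate h2 χ2 σ2 w2 θT2 θR2 βT2 βR2 = tupleRate h χ σ2 ws θTs θRs βTs βRs :=
  optimal_policy_perm_equivariant_general σ2 P h h2 χ χ2 π₁ π₂ hh hχ ws θTs θRs βTs βRs hfeas hopt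
    w2 θT2 θR2 βT2 βR2 hw2 hθT2 hθR2 hβT2 hβR2
end

section
/- With the HGMP defined in the context, consider a single layer t with aggregation maps φ^t, ψ^t, prediction maps 𝒲, 𝒞, 𝒟 and combination maps 𝒰^t, ℬ^t. Suppose the input features of the permuted instance correspond to those of the original instance: û_{π₂(k)} = u_k for all k, b̂_{π₁(s)} = b_s for all s, and ê_{π₁(s), π₂(k)} = e_{s,k} for all s, k. Then the aggregated messages correspond, ĉ_{π₂(k)} = c_k and d̂_{π₁(s)} = d_s, and the updated features correspond: û'_{π₂(k)} = u'_k for all k and b̂'_{π₁(s)} = b'_s for all s, where the primed features are the outputs of one layer of the update rule in each instance. -/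
theorem sum_message_relabel {ι ι' V X E M : Type*} [Fintype ι] [Fintype ι']
    [AddCommMonoid M] (φ : V → X → E → M) (σ : ι ≃ ι') (x : X)
    {b : ι → V} {b' : ι' → V} {e : ι → E} {e' : ι' → E}
    (hb : ∀ i, b' (σ i) = b i) (he : ∀ i, e' (σ i) = e i) :
    ∑ i, φ (b' i) x (e' i) = ∑ i, φ (b i) x (e i) :=
  (Fintype.sum_equiv σ _ _ fun i => by rw [hb, he]).symm

/-- Single-layer equivariance of the heterogeneous graph message passing (HGMP):
if the input features of the permuted instance correspond to those of the original
instance, then the aggregated messages and the updated features correspond. -/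
theorem hgmp_layer_equivariant {U B E M M' W0 C0 D0 : Type*}
    [AddCommMonoid M] [AddCommMonoid M'] {S K : ℕ}
    (φ : B → U → E → M) (ψ : U → B → E → M')
    (𝒲 : U → W0) (𝒞 : B → C0) (𝒟 : B → D0)
    (𝒰 : U → W0 → M → U) (ℬ : B → C0 → D0 → M' → B)
    (e e' : Fin S → Fin K → E) (u u' : Fin K → U) (b b' : Fin S → B)
    (π₁ : Equiv.Perm (Fin S)) (π₂ : Equiv.Perm (Fin K))
    (he : ∀ s k, e' (π₁ s) (π₂ k) = e s k)
    (hu : ∀ k, u' (π₂ k) = u k) (hb : ∀ s, b' (π₁ s) = b s) :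
    (∀ k, (∑ s, φ (b' s) (u' (π₂ k)) (e' s (π₂ k))) =
        ∑ s, φ (b s) (u k) (e s k)) ∧
    (∀ s, (∑ k, ψ (u' k) (b' (π₁ s)) (e' (π₁ s) k)) =
        ∑ k, ψ (u k) (b s) (e s k)) ∧
    (∀ k, 𝒰 (u' (π₂ k)) (𝒲 (u' (π₂ k))) (∑ s, φ (b' s) (u' (π₂ k)) (e' s (π₂ k))) =
        𝒰 (u k) (𝒲 (u k)) (∑ s, φ (b s) (u k) (e s k))) ∧
    (∀ s, ℬ (b' (π₁ s)) (𝒞 (b' (π₁ s))) (𝒟 (b' (π₁ s)))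
          (∑ k, ψ (u' k) (b' (π₁ s)) (e' (π₁ s) k)) =
        ℬ (b s) (𝒞 (b s)) (𝒟 (b s)) (∑ k, ψ (u k) (b s) (e s k))) := by
  have hc : ∀ k, (∑ s, φ (b' s) (u' (π₂ k)) (e' s (π₂ k))) =
      ∑ s, φ (b s) (u k) (e s k) := fun k => by
    rw [hu k]
    exact sum_message_relabel φ π₁ (u k) hb fun s => he s k
  have hd : ∀ s, (∑ k, ψ (u' k) (b' (π₁ s)) (e' (π₁ s) k)) =
      ∑ k, ψ (u k) (b s) (e s k) := fun s => by
    rw [hb s]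
    exact sum_message_relabel ψ π₂ (b s) hu (he s)
  exact ⟨hc, hd, fun k => by rw [hc, hu], fun s => by rw [hd, hb]⟩
end

section
/- (Permutation equivariance of the HGMP.) With the HGMP defined in the context, let π₁ be a permutation of Fin S and π₂ a permutation of Fin K, and let the permuted instance have edge features ê with ê_{π₁(s), π₂(k)} = e_{s,k} and initial features û⁰_{π₂(k)} = u⁰_k and b̂⁰_{π₁(s)} = b⁰_s. Then for every layer index t with 0 ≤ t ≤ T and all k, s: û^{(t)}_{π₂(k)} = u^{(t)}_k and b̂^{(t)}_{π₁(s)} = b^{(t)}_s. In other words, permuting the STAR-RIS element vertices by π₁ and the user vertices by π₂ in the input permutes the output features of the HGMP by the same permutations. -/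
/-- The heterogeneous graph message passing (HGMP) of the BHGNN: `(hgmp ... t)` is
the pair of user features and RIS-element features after `t` layers; layer `t`
aggregates messages with `φ t`, `ψ t` (summed by the pooling function), uses the
predictions `𝒲`, `𝒞`, `𝒟` and combines with `𝒰 t`, `ℬ t`. -/
def hgmp {U B E M M' W0 C0 D0 : Type*} [AddCommMonoid M] [AddCommMonoid M'] {S K : ℕ}
    (e : Fin S → Fin K → E)
    (φ : ℕ → B → U → E → M) (ψ : ℕ → U → B → E → M')
    (𝒲 : U → W0) (𝒞 : B → C0) (𝒟 : B → D0)
    (𝒰 : ℕ → U → W0 → M → U) (ℬ : ℕ → B → C0 → D0 → M' → B)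
    (u0 : Fin K → U) (b0 : Fin S → B) : ℕ → (Fin K → U) × (Fin S → B)
  | 0 => (u0, b0)
  | t + 1 =>
    let p := hgmp e φ ψ 𝒲 𝒞 𝒟 𝒰 ℬ u0 b0 t
    (fun k => 𝒰 (t + 1) (p.1 k) (𝒲 (p.1 k)) (∑ s, φ (t + 1) (p.2 s) (p.1 k) (e s k)),
     fun s => ℬ (t + 1) (p.2 s) (𝒞 (p.2 s)) (𝒟 (p.2 s))
        (∑ k, ψ (t + 1) (p.1 k) (p.2 s) (e s k)))

/-- Proposition 1: permutation equivariance of the HGMP. Permuting the STAR-RIS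
element vertices by `π₁` and the user vertices by `π₂` in the input permutes the
output features of every layer `t ≤ T` by the same permutations. -/
theorem hgmp_perm_equivariant {U B E M M' W0 C0 D0 : Type*}
    [AddCommMonoid M] [AddCommMonoid M'] {S K : ℕ}
    (φ : ℕ → B → U → E → M) (ψ : ℕ → U → B → E → M')
    (𝒲 : U → W0) (𝒞 : B → C0) (𝒟 : B → D0)
    (𝒰 : ℕ → U → W0 → M → U) (ℬ : ℕ → B → C0 → D0 → M' → B)
    (T : ℕ) (e e' : Fin S → Fin K → E)
    (u0 u0' : Fin K → U) (b0 b0' : Fin S → B)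
    (π₁ : Equiv.Perm (Fin S)) (π₂ : Equiv.Perm (Fin K))
    (he : ∀ s k, e' (π₁ s) (π₂ k) = e s k)
    (hu0 : ∀ k, u0' (π₂ k) = u0 k) (hb0 : ∀ s, b0' (π₁ s) = b0 s) :
    ∀ t ≤ T,
      (∀ k, (hgmp e' φ ψ 𝒲 𝒞 𝒟 𝒰 ℬ u0' b0' t).1 (π₂ k) =
          (hgmp e φ ψ 𝒲 𝒞 𝒟 𝒰 ℬ u0 b0 t).1 k) ∧
      (∀ s, (hgmp e' φ ψ 𝒲 𝒞 𝒟 𝒰 ℬ u0' b0' t).2 (π₁ s) =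
          (hgmp e φ ψ 𝒲 𝒞 𝒟 𝒰 ℬ u0 b0 t).2 s) := by
  intro t ht
  clear ht
  induction t with
  | zero => exact ⟨hu0, hb0⟩
  | succ n ih =>
    obtain ⟨ihu, ihb⟩ := ih
    constructor
    · intro k
      simp only [hgmp, ihu, ihb]
      congr 1
      rw [← Equiv.sum_comp π₁ fun s => φ (n+1) ((hgmp e' φ ψ 𝒲 𝒞 𝒟 𝒰 ℬ u0' b0' n).2 s)
        ((hgmp e φ ψ 𝒲 𝒞 𝒟 𝒰 ℬ u0 b0 n).1 k) (e' s (π₂ k))]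
      exact Finset.sum_congr rfl fun s _ => by rw [ihb, he]
    · intro s
      simp only [hgmp, ihu, ihb]
      congr 1
      rw [← Equiv.sum_comp π₂ fun k => ψ (n+1) ((hgmp e' φ ψ 𝒲 𝒞 𝒟 𝒰 ℬ u0' b0' n).1 k)
        ((hgmp e φ ψ 𝒲 𝒞 𝒟 𝒰 ℬ u0 b0 n).2 s) (e' (π₁ s) k)]
      exact Finset.sum_congr rfl fun k _ => by rw [ihu, he]
end

section
/- With the HGMP defined in the context, define the final predicted per-user beamforming outputs and per-element STAR-RIS outputs by w_k := 𝒲(u^{(T)}_k), Θ_s := 𝒞(b^{(T)}_s) and β_s := 𝒟(b^{(T)}_s), and analogously ŵ, Θ̂, β̂ from the features of the permuted instance. If the permuted instance has ê_{π₁(s), π₂(k)} = e_{s,k}, û⁰_{π₂(k)} = u⁰_k and b̂⁰_{π₁(s)} = b⁰_s, then for all k and s: ŵ_{π₂(k)} = w_k, Θ̂_{π₁(s)} = Θ_s and β̂_{π₁(s)} = β_s; i.e., the beamforming vectors, STAR-RIS phase-shift outputs and amplitude outputs produced by the BHGNN are permutation equivariant with respect to user and STAR-RIS-element permutations. -/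
section Relabel

variable {U B E M M' W0 C0 D0 : Type*} [AddCommMonoid M] [AddCommMonoid M'] {S K S' K' : ℕ}
  (φ : ℕ → B → U → E → M) (ψ : ℕ → U → B → E → M')
  (𝒲 : U → W0) (𝒞 : B → C0) (𝒟 : B → D0)
  (𝒰 : ℕ → U → W0 → M → U) (ℬ : ℕ → B → C0 → D0 → M' → B)
  {e : Fin S → Fin K → E} {e' : Fin S' → Fin K' → E}
  {u0 : Fin K → U} {u0' : Fin K' → U} {b0 : Fin S → B} {b0' : Fin S' → B}
  {σ : Fin S ≃ Fin S'} {τ : Fin K ≃ Fin K'}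

theorem hgmp_apply_equiv (he : ∀ s k, e' (σ s) (τ k) = e s k)
    (hu0 : ∀ k, u0' (τ k) = u0 k) (hb0 : ∀ s, b0' (σ s) = b0 s) (t : ℕ) :
    (∀ k, (hgmp e' φ ψ 𝒲 𝒞 𝒟 𝒰 ℬ u0' b0' t).1 (τ k) = (hgmp e φ ψ 𝒲 𝒞 𝒟 𝒰 ℬ u0 b0 t).1 k) ∧
      ∀ s, (hgmp e' φ ψ 𝒲 𝒞 𝒟 𝒰 ℬ u0' b0' t).2 (σ s) = (hgmp e φ ψ 𝒲 𝒞 𝒟 𝒰 ℬ u0 b0 t).2 s := by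
  induction t with
  | zero => exact ⟨hu0, hb0⟩
  | succ t ih =>
    obtain ⟨ihu, ihb⟩ := ih
    refine ⟨fun k => ?_, fun s => ?_⟩ <;> simp only [hgmp]
    · rw [← σ.sum_comp]
      simp only [ihu, ihb, he]
    · rw [← τ.sum_comp]
      simp only [ihu, ihb, he]

end Relabel

/-- The final predicted per-user beamforming outputs `w_k = 𝒲(u_k^{(T)})` and
per-element STAR-RIS outputs `Θ_s = 𝒞(b_s^{(T)})`, `β_s = 𝒟(b_s^{(T)})` of the
BHGNN are permutation equivariant with respect to user and STAR-RIS-element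
permutations. -/
theorem bhgnn_outputs_perm_equivariant {U B E M M' W0 C0 D0 : Type*}
    [AddCommMonoid M] [AddCommMonoid M'] {S K : ℕ}
    (φ : ℕ → B → U → E → M) (ψ : ℕ → U → B → E → M')
    (𝒲 : U → W0) (𝒞 : B → C0) (𝒟 : B → D0)
    (𝒰 : ℕ → U → W0 → M → U) (ℬ : ℕ → B → C0 → D0 → M' → B)
    (T : ℕ) (e e' : Fin S → Fin K → E)
    (u0 u0' : Fin K → U) (b0 b0' : Fin S → B)
    (π₁ : Equiv.Perm (Fin S)) (π₂ : Equiv.Perm (Fin K))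
    (he : ∀ s k, e' (π₁ s) (π₂ k) = e s k)
    (hu0 : ∀ k, u0' (π₂ k) = u0 k) (hb0 : ∀ s, b0' (π₁ s) = b0 s) :
    (∀ k, 𝒲 ((hgmp e' φ ψ 𝒲 𝒞 𝒟 𝒰 ℬ u0' b0' T).1 (π₂ k)) =
        𝒲 ((hgmp e φ ψ 𝒲 𝒞 𝒟 𝒰 ℬ u0 b0 T).1 k)) ∧
    (∀ s, 𝒞 ((hgmp e' φ ψ 𝒲 𝒞 𝒟 𝒰 ℬ u0' b0' T).2 (π₁ s)) =
        𝒞 ((hgmp e φ ψ 𝒲 𝒞 𝒟 𝒰 ℬ u0 b0 T).2 s)) ∧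
    (∀ s, 𝒟 ((hgmp e' φ ψ 𝒲 𝒞 𝒟 𝒰 ℬ u0' b0' T).2 (π₁ s)) =
        𝒟 ((hgmp e φ ψ 𝒲 𝒞 𝒟 𝒰 ℬ u0 b0 T).2 s)) := by
  obtain ⟨hu, hb⟩ := hgmp_apply_equiv φ ψ 𝒲 𝒞 𝒟 𝒰 ℬ he hu0 hb0 T
  exact ⟨fun k => congrArg 𝒲 (hu k), fun s => congrArg 𝒞 (hb s), fun s => congrArg 𝒟 (hb s)⟩
end
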